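/- For every f ∈ L^∞([0,∞)) the value K̄(f) = lim_{θ→0⁺} limsup_{x→∞} (1/θ)∫ₓ^{x+θ} f(t)dt satisfies −‖f‖_∞ ≤ K̄(f) ≤ ‖f‖_∞, and if lim_{x→∞} e^{−x}∫₀ˣ f(t)eᵗ dt = 0 then K̄(f) ≥ 0 and K̄(−f) ≥ 0. -/

import Mathlib

/-!
Write `g θ = limsup_{x→∞} ∫_x^{x+θ} f`, so that `innerK f θ = g θ / θ`. Splitting a window of
length `a + b` into two shows that `g` is subadditive, and `|g θ| ≤ C θ`; as for Fekete's lemma,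
writing `θ₀ = ⌊θ₀/θ⌋ θ + r` with `0 ≤ r < θ` then shows that `g θ / θ` tends to its supremum as
`θ → 0⁺`. For the sign condition, `∫_x^{x+θ} f` differs from `F (x + θ) - e^{-θ} F x`, where
`F x = e^{-x} ∫_0^x f(t) e^t dt`, by at most `C θ²`; so if `F → 0` then `g θ ≥ -C θ²` and the
limit is nonnegative. The same applies to `-f`.
-/

open Filter MeasureTheory Set Topology

/-- The inner limsup defining `K̄`. -/
noncomputable def innerK (f : ℝ → ℝ) (θ : ℝ) : ℝ :=
  Filter.limsup (fun x : ℝ => (∫ t in x..(x + θ), f t) / θ) Filter.atTop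

open Real

section Subadditive

variable {g : ℝ → ℝ} {C : ℝ}

lemma le_natCast_mul_of_subadditive (hsub : ∀ a b, 0 ≤ a → 0 ≤ b → g (a + b) ≤ g a + g b)
    (h0 : g 0 ≤ 0) {θ : ℝ} (hθ : 0 ≤ θ) (n : ℕ) : g (n * θ) ≤ n * g θ := by
  induction n with
  | zero => simpa using h0
  | succ n ih =>
    push_cast
    calc g ((n + 1) * θ) = g (n * θ + θ) := by ring_nf
      _ ≤ g (n * θ) + g θ := hsub _ _ (by positivity) hθ
      _ ≤ (n + 1) * g θ := by linarith

lemma eventually_lt_div_of_subadditive (hsub : ∀ a b, 0 ≤ a → 0 ≤ b → g (a + b) ≤ g a + g b)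
    (hle : ∀ θ, 0 ≤ θ → g θ ≤ C * θ) {θ₀ a : ℝ} (hθ₀ : 0 < θ₀) (ha : a < g θ₀ / θ₀) :
    ∀ᶠ θ in 𝓝[>] 0, a < g θ / θ := by
  set r : ℝ → ℝ := fun θ => θ₀ - ⌊θ₀ / θ⌋₊ * θ with hr
  have hr_bounds : ∀ θ > 0, 0 ≤ r θ ∧ r θ < θ := by
    intro θ hθ
    have h1 := Nat.floor_le (div_nonneg hθ₀.le hθ.le)
    have h2 := Nat.lt_floor_add_one (θ₀ / θ)
    rw [le_div_iff₀ hθ] at h1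
    rw [div_lt_iff₀ hθ] at h2
    constructor <;> linarith
  have hr_tendsto : Tendsto r (𝓝[>] 0) (𝓝 0) := by
    refine tendsto_of_tendsto_of_tendsto_of_le_of_le' tendsto_const_nhds
      (tendsto_nhdsWithin_of_tendsto_nhds tendsto_id) ?_ ?_ <;>
      filter_upwards [self_mem_nhdsWithin] with θ hθ
    exacts [(hr_bounds θ hθ).1, (hr_bounds θ hθ).2.le]
  have hlower : Tendsto (fun θ => (g θ₀ - C * r θ) / (θ₀ - r θ)) (𝓝[>] 0)
      (𝓝 ((g θ₀ - C * 0) / (θ₀ - 0))) :=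
    (tendsto_const_nhds.sub (hr_tendsto.const_mul C)).div
      (tendsto_const_nhds.sub hr_tendsto) (by simpa using hθ₀.ne')
  rw [mul_zero, sub_zero, sub_zero] at hlower
  filter_upwards [hlower.eventually_const_lt ha, Ioo_mem_nhdsGT hθ₀] with θ hlt ⟨hθ, hθθ₀⟩
  obtain ⟨hr0, hrθ⟩ := hr_bounds θ hθ
  have hsplit : g θ₀ ≤ ⌊θ₀ / θ⌋₊ * g θ + C * r θ :=
    calc g θ₀ = g (⌊θ₀ / θ⌋₊ * θ + r θ) := by rw [hr]; ring_nf
      _ ≤ g (⌊θ₀ / θ⌋₊ * θ) + g (r θ) := hsub _ _ (by positivity) hr0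
      _ ≤ ⌊θ₀ / θ⌋₊ * g θ + C * r θ := by
        gcongr
        · exact le_natCast_mul_of_subadditive hsub (by simpa using hle 0 le_rfl) hθ.le _
        · exact hle _ hr0
  refine hlt.trans_le ((div_le_iff₀ (by linarith)).2 ?_)
  calc g θ₀ - C * r θ ≤ ⌊θ₀ / θ⌋₊ * g θ := by linarith
    _ = g θ / θ * (θ₀ - r θ) := by rw [show θ₀ - r θ = ⌊θ₀ / θ⌋₊ * θ by ring]; field_simp

theorem tendsto_div_nhdsGT_sSup_of_subadditive
    (hsub : ∀ a b, 0 ≤ a → 0 ≤ b → g (a + b) ≤ g a + g b) (hle : ∀ θ, 0 ≤ θ → g θ ≤ C * θ) :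
    Tendsto (fun θ => g θ / θ) (𝓝[>] 0) (𝓝 (sSup ((fun θ => g θ / θ) '' Ioi 0))) := by
  set s := (fun θ => g θ / θ) '' Ioi 0
  have hbdd : BddAbove s := by
    refine ⟨C, ?_⟩
    rintro _ ⟨θ, hθ, rfl⟩
    exact (div_le_iff₀ hθ).2 (hle θ (le_of_lt hθ))
  refine tendsto_order.2 ⟨fun a ha => ?_, fun a ha => ?_⟩
  · obtain ⟨_, ⟨θ₀, hθ₀, rfl⟩, hlt⟩ := exists_lt_of_lt_csSup (nonempty_Ioi.image _) ha
    exact eventually_lt_div_of_subadditive hsub hle hθ₀ hlt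
  · filter_upwards [self_mem_nhdsWithin] with θ hθ
    exact (le_csSup hbdd ⟨θ, hθ, rfl⟩).trans_lt ha

end Subadditive

noncomputable def windowIntegral (f : ℝ → ℝ) (θ x : ℝ) : ℝ := ∫ t in x..x + θ, f t

noncomputable def limsupWindowIntegral (f : ℝ → ℝ) (θ : ℝ) : ℝ :=
  limsup (windowIntegral f θ) atTop

noncomputable def expAverage (f : ℝ → ℝ) (x : ℝ) : ℝ := exp (-x) * ∫ t in (0 : ℝ)..x, f t * exp t

section WindowIntegral

variable {f : ℝ → ℝ} {C : ℝ}

lemma intervalIntegrable_of_abs_le (hm : Measurable f) (hb : ∀ x ≥ (0 : ℝ), |f x| ≤ C)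
    {a b : ℝ} (ha : 0 ≤ a) (hb' : 0 ≤ b) : IntervalIntegrable f volume a b := by
  rw [intervalIntegrable_iff]
  refine Measure.integrableOn_of_bounded (M := C) measure_Ioc_lt_top.ne
    hm.aestronglyMeasurable ?_
  filter_upwards [ae_restrict_mem measurableSet_uIoc] with t ht
  exact hb t ((le_min ha hb').trans ht.1.le)

lemma abs_windowIntegral_le (hb : ∀ x ≥ (0 : ℝ), |f x| ≤ C) {θ x : ℝ} (hθ : 0 ≤ θ)
    (hx : 0 ≤ x) : |windowIntegral f θ x| ≤ C * θ := by
  have h := intervalIntegral.norm_integral_le_of_norm_le_const (f := f) (a := x) (b := x + θ)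
    fun t ht => hb t (hx.trans (by rw [uIoc_of_le (by linarith)] at ht; exact ht.1.le))
  simpa [windowIntegral, abs_of_nonneg hθ] using h

lemma isBoundedUnder_abs_windowIntegral (hb : ∀ x ≥ (0 : ℝ), |f x| ≤ C) {θ : ℝ} (hθ : 0 ≤ θ) :
    IsBoundedUnder (· ≤ ·) atTop fun x => |windowIntegral f θ x| :=
  isBoundedUnder_of_eventually_le <|
    (eventually_ge_atTop 0).mono fun _ hx => abs_windowIntegral_le hb hθ hx

lemma abs_limsupWindowIntegral_le (hb : ∀ x ≥ (0 : ℝ), |f x| ≤ C) {θ : ℝ} (hθ : 0 ≤ θ) :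
    |limsupWindowIntegral f θ| ≤ C * θ := by
  obtain ⟨hbdd_le, hbdd_ge⟩ := isBoundedUnder_le_abs.1 (isBoundedUnder_abs_windowIntegral hb hθ)
  have hbound : ∀ᶠ x in atTop, |windowIntegral f θ x| ≤ C * θ :=
    (eventually_ge_atTop 0).mono fun _ hx => abs_windowIntegral_le hb hθ hx
  rw [abs_le]
  constructor
  · exact le_limsup_of_frequently_le (hbound.mono fun _ h => (abs_le.1 h).1).frequently hbdd_le
  · exact limsup_le_of_le hbdd_ge.isCoboundedUnder_le (hbound.mono fun _ h => (abs_le.1 h).2)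

lemma windowIntegral_add (hm : Measurable f) (hb : ∀ x ≥ (0 : ℝ), |f x| ≤ C) {a b x : ℝ}
    (ha : 0 ≤ a) (hb' : 0 ≤ b) (hx : 0 ≤ x) :
    windowIntegral f (a + b) x = windowIntegral f a x + windowIntegral f b (x + a) := by
  simp only [windowIntegral]
  rw [← add_assoc, intervalIntegral.integral_add_adjacent_intervals] <;>
    exact intervalIntegrable_of_abs_le hm hb (by positivity) (by positivity)

lemma limsupWindowIntegral_add_le (hm : Measurable f) (hb : ∀ x ≥ (0 : ℝ), |f x| ≤ C)
    {a b : ℝ} (ha : 0 ≤ a) (hb' : 0 ≤ b) :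
    limsupWindowIntegral f (a + b) ≤ limsupWindowIntegral f a + limsupWindowIntegral f b := by
  have hshift : Tendsto (· + a) atTop atTop := tendsto_atTop_add_const_right atTop a tendsto_id
  obtain ⟨ha_le, ha_ge⟩ := isBoundedUnder_le_abs.1 (isBoundedUnder_abs_windowIntegral hb ha)
  obtain ⟨hb_le, hb_ge⟩ := isBoundedUnder_le_abs.1 (isBoundedUnder_abs_windowIntegral hb hb')
  calc limsupWindowIntegral f (a + b)
      = limsup (windowIntegral f a + windowIntegral f b ∘ (· + a)) atTop :=
        limsup_congr <| (eventually_ge_atTop 0).mono fun x hx => windowIntegral_add hm hb ha hb' hx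
    _ ≤ limsupWindowIntegral f a + limsup (windowIntegral f b ∘ (· + a)) atTop :=
        limsup_add_le ha_ge ha_le (hshift.isBoundedUnder_comp hb_ge).isCoboundedUnder_le
          (hshift.isBoundedUnder_comp hb_le)
    _ = limsupWindowIntegral f a + limsupWindowIntegral f b := by
        rw [limsup_comp, map_add_atTop_eq]; rfl

lemma innerK_eq_div (hb : ∀ x ≥ (0 : ℝ), |f x| ≤ C) {θ : ℝ} (hθ : 0 < θ) :
    innerK f θ = limsupWindowIntegral f θ / θ := by
  obtain ⟨hbdd_le, hbdd_ge⟩ := isBoundedUnder_le_abs.1 (isBoundedUnder_abs_windowIntegral hb hθ.le)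
  have hmono : Monotone (· / θ) := fun _ _ h => div_le_div_of_nonneg_right h hθ.le
  exact (hmono.map_limsup_of_continuousAt (windowIntegral f θ)
    (continuous_id.div_const θ).continuousAt hbdd_le hbdd_ge.isCoboundedUnder_le).symm

lemma abs_innerK_le (hb : ∀ x ≥ (0 : ℝ), |f x| ≤ C) {θ : ℝ} (hθ : 0 < θ) : |innerK f θ| ≤ C := by
  rw [innerK_eq_div hb hθ, abs_div, abs_of_pos hθ, div_le_iff₀ hθ]
  exact abs_limsupWindowIntegral_le hb hθ.le

theorem exists_tendsto_innerK (hm : Measurable f) (hb : ∀ x ≥ (0 : ℝ), |f x| ≤ C) :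
    ∃ L, Tendsto (innerK f) (𝓝[>] 0) (𝓝 L) := by
  refine ⟨_, (tendsto_div_nhdsGT_sSup_of_subadditive (C := C)
    (fun a b ha hb' => limsupWindowIntegral_add_le hm hb ha hb')
    fun θ hθ => (abs_le.1 (abs_limsupWindowIntegral_le hb hθ)).2).congr' ?_⟩
  filter_upwards [self_mem_nhdsWithin] with θ hθ using (innerK_eq_div hb hθ).symm

end WindowIntegral

section ExpAverage

variable {f : ℝ → ℝ} {C : ℝ}

lemma expAverage_neg (f : ℝ → ℝ) : expAverage (-f) = -expAverage f := by
  ext x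
  simp [expAverage, intervalIntegral.integral_neg]

lemma expAverage_add_sub (hm : Measurable f) (hb : ∀ x ≥ (0 : ℝ), |f x| ≤ C) {θ x : ℝ}
    (hθ : 0 ≤ θ) (hx : 0 ≤ x) :
    expAverage f (x + θ) - exp (-θ) * expAverage f x =
      ∫ t in x..x + θ, f t * exp (t - (x + θ)) := by
  have hint : ∀ a b : ℝ, 0 ≤ a → 0 ≤ b → IntervalIntegrable (fun t => f t * exp t) volume a b :=
    fun a b ha hb' => (intervalIntegrable_of_abs_le hm hb ha hb').mul_continuousOn
      continuous_exp.continuousOn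
  simp only [expAverage, sub_eq_add_neg (_ : ℝ) (x + θ), exp_add, ← mul_assoc,
    intervalIntegral.integral_mul_const]
  rw [← intervalIntegral.integral_add_adjacent_intervals (hint 0 x le_rfl hx)
    (hint x (x + θ) hx (by positivity)), neg_add, exp_add]
  ring

lemma abs_windowIntegral_sub_le (hm : Measurable f) (hb : ∀ x ≥ (0 : ℝ), |f x| ≤ C) {θ x : ℝ}
    (hθ : 0 ≤ θ) (hx : 0 ≤ x) :
    |windowIntegral f θ x - ∫ t in x..x + θ, f t * exp (t - (x + θ))| ≤ C * θ ^ 2 := by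
  have hint := intervalIntegrable_of_abs_le hm hb hx (by positivity : 0 ≤ x + θ)
  rw [windowIntegral, ← intervalIntegral.integral_sub hint
    (hint.mul_continuousOn (by fun_prop))]
  have hbound : ∀ t ∈ uIoc x (x + θ), ‖f t - f t * exp (t - (x + θ))‖ ≤ C * θ := by
    intro t ht
    rw [uIoc_of_le (by linarith)] at ht
    -- `0 ≤ 1 - e^{t - (x + θ)} ≤ x + θ - t ≤ θ`
    have hexp_le : exp (t - (x + θ)) ≤ 1 := exp_le_one_iff.2 (by linarith [ht.2])
    have hexp_ge := add_one_le_exp (t - (x + θ))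
    rw [show f t - f t * exp (t - (x + θ)) = f t * (1 - exp (t - (x + θ))) by ring,
      Real.norm_eq_abs, abs_mul, abs_of_nonneg (sub_nonneg.2 hexp_le)]
    exact mul_le_mul (hb t (hx.trans ht.1.le)) (by linarith [ht.1])
      (by linarith) ((abs_nonneg _).trans (hb 0 le_rfl))
  have h := intervalIntegral.norm_integral_le_of_norm_le_const hbound
  rw [Real.norm_eq_abs, add_sub_cancel_left, abs_of_nonneg hθ] at h
  linarith

lemma neg_mul_sq_le_limsupWindowIntegral (hm : Measurable f) (hb : ∀ x ≥ (0 : ℝ), |f x| ≤ C)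
    (hT : Tendsto (expAverage f) atTop (𝓝 0)) {θ : ℝ} (hθ : 0 ≤ θ) :
    -(C * θ ^ 2) ≤ limsupWindowIntegral f θ := by
  have hlower : Tendsto (fun x => expAverage f (x + θ) - exp (-θ) * expAverage f x - C * θ ^ 2)
      atTop (𝓝 (-(C * θ ^ 2))) := by
    simpa using ((hT.comp (tendsto_atTop_add_const_right atTop θ tendsto_id)).sub
      (hT.const_mul (exp (-θ)))).sub_const (C * θ ^ 2)
  rw [← hlower.limsup_eq]
  refine limsup_le_limsup ?_ hlower.isBoundedUnder_ge.isCoboundedUnder_le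
    (isBoundedUnder_le_abs.1 (isBoundedUnder_abs_windowIntegral hb hθ)).1
  filter_upwards [eventually_ge_atTop 0] with x hx
  have h := abs_windowIntegral_sub_le hm hb hθ hx
  rw [← expAverage_add_sub hm hb hθ hx] at h
  linarith [(abs_le.1 h).1]

lemma nonneg_of_tendsto_innerK (hm : Measurable f) (hb : ∀ x ≥ (0 : ℝ), |f x| ≤ C) {L : ℝ}
    (hL : Tendsto (innerK f) (𝓝[>] 0) (𝓝 L)) (hT : Tendsto (expAverage f) atTop (𝓝 0)) :
    0 ≤ L := by
  have hlower : Tendsto (fun θ => -(C * θ)) (𝓝[>] 0) (𝓝 0) :=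
    ((continuous_const.mul continuous_id).neg.tendsto' 0 0 (by simp)).mono_left nhdsWithin_le_nhds
  refine le_of_tendsto_of_tendsto hlower hL ?_
  filter_upwards [self_mem_nhdsWithin] with θ hθ
  rw [innerK_eq_div hb hθ, le_div_iff₀ hθ]
  linarith [neg_mul_sq_le_limsupWindowIntegral hm hb hT hθ.le]

end ExpAverage

/-- For `f ∈ L^∞([0,∞))`: `−‖f‖_∞ ≤ K̄(f) ≤ ‖f‖_∞`, and if
`lim_{x→∞} e^{−x}∫₀ˣ f(t)eᵗ dt = 0` then `K̄(f) ≥ 0` and `K̄(−f) ≥ 0`. -/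
theorem Kbar_bounds_and_nonneg (f : ℝ → ℝ) (C : ℝ)
    (hm : Measurable f) (hb : ∀ x ≥ (0 : ℝ), |f x| ≤ C) :
    ∃ L L' : ℝ,
      Tendsto (innerK f) (𝓝[>] (0 : ℝ)) (𝓝 L) ∧
      Tendsto (innerK (fun x => -f x)) (𝓝[>] (0 : ℝ)) (𝓝 L') ∧
      -C ≤ L ∧ L ≤ C ∧
      (Tendsto (fun x : ℝ =>
          Real.exp (-x) * ∫ t in (0 : ℝ)..x, f t * Real.exp t) atTop (𝓝 0) →
        0 ≤ L ∧ 0 ≤ L') := by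
  have hb_neg : ∀ x ≥ (0 : ℝ), |-f x| ≤ C := fun x hx => (abs_neg (f x)).trans_le (hb x hx)
  obtain ⟨L, hL⟩ := exists_tendsto_innerK hm hb
  obtain ⟨L', hL'⟩ := exists_tendsto_innerK hm.neg hb_neg
  have hLC : |L| ≤ C := le_of_tendsto hL.abs <|
    eventually_mem_nhdsWithin.mono fun θ hθ => abs_innerK_le hb hθ
  refine ⟨L, L', hL, hL', (abs_le.1 hLC).1, (abs_le.1 hLC).2, fun hT => ⟨?_, ?_⟩⟩
  · exact nonneg_of_tendsto_innerK hm hb hL hT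
  · refine nonneg_of_tendsto_innerK hm.neg hb_neg hL' ?_
    rw [expAverage_neg, ← neg_zero]
    exact hT.neg
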